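/- Let k be an algebraically closed field of characteristic zero, n, m ≥ 2 integers, ζ ∈ k a primitive 2n-th root of unity, and q = ζ². In the group algebra k[A] of A = (Fin m → ZMod n), define Λ_λ = n^{−m} ∑_{i ∈ A} q^{λ·i} x^i, and for 1 ≤ l ≤ m−1 set y_l = ∑_{λ ∈ A} ζ^{−λ_l λ_{l+1}} Λ_λ and w_l = (1/n) ∑_{i,j=0}^{n−1} q^{−ij} x^{i·e_l + j·e_{l+1}}, where e_l, e_{l+1} ∈ A are the standard generators. Then w_l = ∑_{λ ∈ A} q^{λ_l λ_{l+1}} Λ_λ; in particular w_l · y_l² = 1, i.e. w_l = y_l^{−2}. -/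
import Mathlib


/-- The idempotent `Λ_λ = n^{−m} ∑_{i ∈ A} q^{λ·i} x^i` in the group algebra of
`A = (Fin m → ZMod n)`. -/
noncomputable def Lam {k : Type*} [Field k] (n m : ℕ) [NeZero n] (q : k)
    (lam : Fin m → ZMod n) : MonoidAlgebra k (Multiplicative (Fin m → ZMod n)) :=
  ((n : k) ^ m)⁻¹ • ∑ i : Fin m → ZMod n,
    q ^ (∑ j, lam j * i j : ZMod n).val •
      MonoidAlgebra.of k (Multiplicative (Fin m → ZMod n)) (Multiplicative.ofAdd i)

/-- The element `y_l = ∑_{λ ∈ A} ζ^{−λ_l λ_{l+1}} Λ_λ`, where the exponent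
`λ_l λ_{l+1}` is computed via natural-number representatives. -/
noncomputable def yElt {k : Type*} [Field k] (n m : ℕ) [NeZero n] (ζ : k)
    (l : Fin m) (hl : (l : ℕ) + 1 < m) :
    MonoidAlgebra k (Multiplicative (Fin m → ZMod n)) :=
  ∑ lam : Fin m → ZMod n,
    (ζ⁻¹) ^ ((lam l).val * (lam ⟨(l : ℕ) + 1, hl⟩).val) • Lam n m (ζ ^ 2) lam

/-- The element `w_l = (1/n) ∑_{i,j=0}^{n−1} q^{−ij} x^{i·e_l + j·e_{l+1}}`, where
`e_l, e_{l+1} ∈ A` are the standard generators. -/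
noncomputable def wElt {k : Type*} [Field k] (n m : ℕ) [NeZero n] (q : k)
    (l : Fin m) (hl : (l : ℕ) + 1 < m) :
    MonoidAlgebra k (Multiplicative (Fin m → ZMod n)) :=
  (n : k)⁻¹ • ∑ i ∈ Finset.range n, ∑ j ∈ Finset.range n,
    (q⁻¹) ^ (i * j) •
      MonoidAlgebra.of k (Multiplicative (Fin m → ZMod n))
        (Multiplicative.ofAdd
          ((Pi.single l ((i : ZMod n)) + Pi.single (⟨(l : ℕ) + 1, hl⟩ : Fin m) ((j : ZMod n))
            : Fin m → ZMod n)))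


namespace W11
open scoped Classical
set_option linter.unusedSectionVars false
variable {k : Type*} [Field k] {n : ℕ} [NeZero n] {q : k}

/-- character `a ↦ q^a.val` -/
noncomputable def chi (q : k) (a : ZMod n) : k := q ^ a.val

lemma pow_mod_n (hq : q ^ n = 1) (a : ℕ) : q ^ (a % n) = q ^ a := by
  conv_rhs => rw [← Nat.div_add_mod a n, pow_add, pow_mul, hq, one_pow, one_mul]

lemma chi_zero : chi q (0 : ZMod n) = 1 := by simp [chi]

lemma chi_add (hq : q ^ n = 1) (a b : ZMod n) : chi q (a + b) = chi q a * chi q b := by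
  rw [chi, ZMod.val_add, pow_mod_n hq, pow_add]; rfl

lemma chi_sum (hq : q ^ n = 1) {ι : Type*} (s : Finset ι) (f : ι → ZMod n) :
    chi q (∑ j ∈ s, f j) = ∏ j ∈ s, chi q (f j) := by
  classical
  induction s using Finset.cons_induction with
  | empty => simp [chi_zero]
  | cons a s ha ih => rw [Finset.sum_cons, Finset.prod_cons, chi_add hq, ih]

lemma chi_natCast_mul (hq : q ^ n = 1) (b : ZMod n) (i : ℕ) :
    chi q ((i : ZMod n) * b) = chi q b ^ i := by
  induction i with
  | zero => simp [chi_zero]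
  | succ i ih =>
      push_cast
      rw [add_mul, one_mul, chi_add hq, ih, pow_succ]

lemma chi_val_cast (a : ZMod n) : ((a.val : ℕ) : ZMod n) = a := by
  simp [ZMod.natCast_val, ZMod.cast_id]

lemma chi_neg_mul_neg (a b : ZMod n) : chi q (-(a * -b)) = chi q (a * b) := by
  ring_nf

lemma sum_range_val {M : Type*} [AddCommMonoid M] (f : ℕ → M) :
    ∑ a : ZMod n, f a.val = ∑ i ∈ Finset.range n, f i := by
  apply Finset.sum_nbij' (i := fun a : ZMod n => a.val) (j := fun i : ℕ => (i : ZMod n))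
  · intro a _; exact Finset.mem_range.mpr (ZMod.val_lt a)
  · intro i _; exact Finset.mem_univ _
  · intro a _; exact chi_val_cast a
  · intro i hi; exact ZMod.val_cast_of_lt (Finset.mem_range.mp hi)
  · intro a _; rfl

lemma geom_sum_eq_ite {r : k} (hr : r ^ n = 1) :
    ∑ j ∈ Finset.range n, r ^ j = if r = 1 then (n : k) else 0 := by
  split_ifs with h
  · simp [h]
  · rw [geom_sum_eq h, hr, sub_self, zero_div]

lemma q_ne_zero (hq : q ^ n = 1) : q ≠ 0 := by
  intro h
  rw [h, zero_pow (NeZero.ne n)] at hq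
  exact zero_ne_one hq

/-- sum of a character over `ZMod n` -/
lemma sum_chi (hq : IsPrimitiveRoot q n) (t : ZMod n) :
    ∑ a : ZMod n, chi q (t * a) = if t = 0 then (n : k) else 0 := by
  have hq1 : q ^ n = 1 := hq.pow_eq_one
  have : ∀ a : ZMod n, chi q (t * a) = (chi q t) ^ a.val := by
    intro a
    conv_lhs => rw [← chi_val_cast a, mul_comm, chi_natCast_mul hq1]
  simp only [this]
  rw [sum_range_val (fun i => chi q t ^ i), geom_sum_eq_ite (by
    rw [chi, ← pow_mul, mul_comm, pow_mul, hq1, one_pow])]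
  by_cases h : t = 0
  · simp [h, chi_zero]
  · rw [if_neg h, if_neg]
    intro h1
    rw [chi, hq.pow_eq_one_iff_dvd] at h1
    have := Nat.eq_zero_of_dvd_of_lt h1 (ZMod.val_lt t)
    exact h ((ZMod.val_eq_zero t).mp this)

variable (k) in
noncomputable def X {m : ℕ} (i : Fin m → ZMod n) :
    MonoidAlgebra k (Multiplicative (Fin m → ZMod n)) :=
  MonoidAlgebra.of k (Multiplicative (Fin m → ZMod n)) (Multiplicative.ofAdd i)

lemma X_mul {m : ℕ} (i j : Fin m → ZMod n) : X k i * X k j = X k (i + j) := by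
  rw [X, X, X, ← map_mul, ← ofAdd_add]

lemma X_zero {m : ℕ} : X k (0 : Fin m → ZMod n) = 1 := by
  rw [X, ofAdd_zero, map_one]

def dot {m : ℕ} (lam i : Fin m → ZMod n) : ZMod n := ∑ j, lam j * i j

lemma dot_comm {m : ℕ} (a b : Fin m → ZMod n) : dot a b = dot b a := by
  simp [dot, mul_comm]

lemma dot_zero_right {m : ℕ} (a : Fin m → ZMod n) : dot a 0 = 0 := by simp [dot]

lemma dot_sub_left {m : ℕ} (a b i : Fin m → ZMod n) : dot (a - b) i = dot a i - dot b i := by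
  simp [dot, sub_mul, Finset.sum_sub_distrib]

lemma dot_sub_right {m : ℕ} (a i v : Fin m → ZMod n) : dot a (i - v) = dot a i - dot a v := by
  simp [dot, mul_sub, Finset.sum_sub_distrib]

lemma sum_chi_dot (hq : IsPrimitiveRoot q n) {m : ℕ} (mu : Fin m → ZMod n) :
    ∑ i : Fin m → ZMod n, chi q (dot mu i) = if mu = 0 then ((n : k)) ^ m else 0 := by
  have h1 : ∀ i : Fin m → ZMod n, chi q (dot mu i) = ∏ j, chi q (mu j * i j) := fun i =>
    chi_sum hq.pow_eq_one _ _
  simp only [h1]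
  rw [← Fintype.piFinset_univ, ← Finset.prod_univ_sum (fun _ : Fin m => (Finset.univ : Finset (ZMod n))) (fun j a => chi q (mu j * a))]
  simp only [sum_chi hq]
  by_cases h : mu = 0
  · simp [h]
  · rw [if_neg h]
    obtain ⟨j, hj⟩ : ∃ j, mu j ≠ 0 := by
      by_contra hc; push_neg at hc; exact h (funext hc)
    exact Finset.prod_eq_zero (Finset.mem_univ j) (by simp [hj])

end W11

namespace W11
open scoped Classical
set_option linter.unusedSectionVars false

variable {k : Type*} [Field k] {n m : ℕ} [NeZero n] {q : k}

lemma Lam_eq (lam : Fin m → ZMod n) :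
    Lam n m q lam = ((n : k) ^ m)⁻¹ • ∑ i : Fin m → ZMod n, chi q (dot lam i) • X k i := rfl

lemma X_eq_sum (hq : IsPrimitiveRoot q n) (hn0 : (n : k) ≠ 0) (v : Fin m → ZMod n) :
    X k v = ∑ lam : Fin m → ZMod n, chi q (-(dot lam v)) • Lam n m q lam := by
  have hq1 := hq.pow_eq_one
  symm
  calc ∑ lam : Fin m → ZMod n, chi q (-(dot lam v)) • Lam n m q lam
      = ∑ lam : Fin m → ZMod n, ∑ i : Fin m → ZMod n,
          (((n : k) ^ m)⁻¹ * chi q (dot lam (i - v))) • X k i := by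
        refine Finset.sum_congr rfl fun lam _ => ?_
        rw [Lam_eq, smul_smul, Finset.smul_sum]
        refine Finset.sum_congr rfl fun i _ => ?_
        rw [smul_smul]
        congr 1
        rw [dot_sub_right, sub_eq_neg_add, chi_add hq1]
        ring
    _ = ∑ i : Fin m → ZMod n,
          (((n : k) ^ m)⁻¹ * ∑ lam : Fin m → ZMod n, chi q (dot (i - v) lam)) • X k i := by
        rw [Finset.sum_comm]
        refine Finset.sum_congr rfl fun i _ => ?_
        rw [Finset.mul_sum, Finset.sum_smul]
        refine Finset.sum_congr rfl fun lam _ => ?_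
        rw [dot_comm]
    _ = X k v := by
        simp only [sum_chi_dot hq]
        rw [Finset.sum_eq_single v]
        · simp [inv_mul_cancel₀ (pow_ne_zero m hn0)]
        · intro i _ hiv
          rw [if_neg (fun h => hiv (sub_eq_zero.mp h)), mul_zero, zero_smul]
        · intro h; exact absurd (Finset.mem_univ v) h

lemma Lam_mul_X (hq : IsPrimitiveRoot q n) (lam v : Fin m → ZMod n) :
    Lam n m q lam * X k v = chi q (-(dot lam v)) • Lam n m q lam := by
  have hq1 := hq.pow_eq_one
  have core : (∑ i : Fin m → ZMod n, chi q (dot lam i) • X k i) * X k v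
      = chi q (-(dot lam v)) • ∑ i : Fin m → ZMod n, chi q (dot lam i) • X k i := by
    rw [Finset.sum_mul]
    calc ∑ i : Fin m → ZMod n, chi q (dot lam i) • X k i * X k v
        = ∑ i : Fin m → ZMod n, chi q (dot lam i) • X k (i + v) := by
          refine Finset.sum_congr rfl fun i _ => ?_
          rw [smul_mul_assoc, X_mul]
      _ = ∑ i : Fin m → ZMod n, chi q (dot lam (i - v)) • X k i := by
          apply Fintype.sum_equiv (Equiv.addRight v)
          intro i
          simp only [Equiv.coe_addRight, add_sub_cancel_right]
      _ = chi q (-(dot lam v)) • ∑ i : Fin m → ZMod n, chi q (dot lam i) • X k i := by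
          rw [Finset.smul_sum]
          refine Finset.sum_congr rfl fun i _ => ?_
          rw [dot_sub_right, sub_eq_neg_add, chi_add hq1, mul_smul]
  rw [Lam_eq, smul_mul_assoc, core, smul_comm]

lemma Lam_mul_Lam (hq : IsPrimitiveRoot q n) (hn0 : (n : k) ≠ 0) (lam mu : Fin m → ZMod n) :
    Lam n m q lam * Lam n m q mu = if lam = mu then Lam n m q lam else 0 := by
  have hq1 := hq.pow_eq_one
  conv_lhs => rw [Lam_eq (q := q) mu]
  rw [mul_smul_comm, Finset.mul_sum]
  have h1 : ∀ i : Fin m → ZMod n,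
      Lam n m q lam * chi q (dot mu i) • X k i
        = chi q (dot (mu - lam) i) • Lam n m q lam := by
    intro i
    rw [mul_smul_comm, Lam_mul_X hq, smul_smul, dot_sub_left, sub_eq_add_neg, chi_add hq1]
  simp only [h1]
  rw [← Finset.sum_smul]
  rw [show (∑ i : Fin m → ZMod n, chi q (dot (mu - lam) i)) = if mu - lam = 0 then ((n:k))^m else 0
    from sum_chi_dot hq _]
  by_cases h : lam = mu
  · rw [if_pos (by rw [h, sub_self]), if_pos h, smul_smul,
      inv_mul_cancel₀ (pow_ne_zero m hn0), one_smul]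
  · rw [if_neg (fun hh => h (sub_eq_zero.mp hh).symm), if_neg h, zero_smul, smul_zero]

lemma sum_Lam_eq_one (hq : IsPrimitiveRoot q n) (hn0 : (n : k) ≠ 0) :
    ∑ lam : Fin m → ZMod n, Lam n m q lam = 1 := by
  have := X_eq_sum (k := k) (m := m) hq hn0 0
  simp only [dot_zero_right, neg_zero, chi_zero, one_smul] at this
  rw [← this, X_zero]

lemma sum_smul_Lam_mul (hq : IsPrimitiveRoot q n) (hn0 : (n : k) ≠ 0)
    (a b : (Fin m → ZMod n) → k) :
    (∑ lam : Fin m → ZMod n, a lam • Lam n m q lam)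
      * (∑ lam : Fin m → ZMod n, b lam • Lam n m q lam)
      = ∑ lam : Fin m → ZMod n, (a lam * b lam) • Lam n m q lam := by
  rw [Finset.sum_mul_sum]
  have h1 : ∀ lam mu : Fin m → ZMod n,
      (a lam • Lam n m q lam) * (b mu • Lam n m q mu)
        = (a lam * b mu) • (if lam = mu then Lam n m q lam else 0) := by
    intro lam mu
    rw [smul_mul_smul_comm, Lam_mul_Lam hq hn0]
  simp only [h1, smul_ite, smul_zero]
  refine Finset.sum_congr rfl fun lam _ => ?_
  rw [Finset.sum_ite_eq, if_pos (Finset.mem_univ lam)]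

end W11

namespace W11
open scoped Classical
set_option linter.unusedSectionVars false

variable {k : Type*} [Field k] {n m : ℕ} [NeZero n] {q : k}

lemma w_coeff (hq : IsPrimitiveRoot q n) (hn0 : (n : k) ≠ 0) (a b : ZMod n) :
    (n : k)⁻¹ * ∑ i ∈ Finset.range n, ∑ j ∈ Finset.range n,
      (q⁻¹) ^ (i * j) * chi q (-(a * (i : ZMod n) + b * (j : ZMod n)))
      = chi q (a * b) := by
  have hq1 := hq.pow_eq_one
  have hqne : q ≠ 0 := q_ne_zero hq1
  have hterm : ∀ i j : ℕ, (q⁻¹) ^ (i * j) * chi q (-(a * (i : ZMod n) + b * (j : ZMod n)))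
      = chi q (-(a * (i : ZMod n))) * ((q⁻¹) ^ i * chi q (-b)) ^ j := by
    intro i j
    rw [neg_add, chi_add hq1,
      show -(b * ((j : ℕ) : ZMod n)) = ((j : ℕ) : ZMod n) * (-b) by ring,
      chi_natCast_mul hq1, mul_pow, pow_mul]
    ring
  simp only [hterm, ← Finset.mul_sum]
  have hrn : ∀ i : ℕ, ((q⁻¹) ^ i * chi q (-b)) ^ n = 1 := by
    intro i
    rw [mul_pow, ← pow_mul, mul_comm i n, pow_mul, inv_pow, hq1, inv_one, one_pow, one_mul,
      chi, ← pow_mul, mul_comm, pow_mul, hq1, one_pow]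
  have hgeom : ∀ i ∈ Finset.range n,
      chi q (-(a * (i : ZMod n))) * ∑ j ∈ Finset.range n, ((q⁻¹) ^ i * chi q (-b)) ^ j
      = chi q (-(a * (i : ZMod n))) * (if i = (-b).val then (n : k) else 0) := by
    intro i hi
    rw [geom_sum_eq_ite (hrn i)]
    congr 1
    have : ((q⁻¹) ^ i * chi q (-b) = 1) ↔ (i = (-b).val) := by
      constructor
      · intro h
        rw [inv_pow, chi, inv_mul_eq_one₀ (pow_ne_zero i hqne)] at h
        exact hq.pow_inj (Finset.mem_range.mp hi) (ZMod.val_lt (-b)) h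
      · rintro rfl
        rw [inv_pow, chi, inv_mul_cancel₀ (pow_ne_zero _ hqne)]
    simp only [this]
  rw [Finset.sum_congr rfl hgeom]
  simp only [mul_ite, mul_zero]
  rw [Finset.sum_ite_eq' (Finset.range n) ((-b).val)
    (fun i => chi q (-(a * (i : ZMod n))) * (n : k)),
    if_pos (Finset.mem_range.mpr (ZMod.val_lt (-b))), chi_val_cast, chi_neg_mul_neg]
  rw [mul_comm (chi q (a * b)) (n : k), ← mul_assoc, inv_mul_cancel₀ hn0, one_mul]

lemma dot_single_single (lam : Fin m → ZMod n) (u u' : Fin m) (a b : ZMod n) :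
    dot lam (Pi.single u a + Pi.single u' b) = lam u * a + lam u' * b := by
  have hsingle : ∀ (w : Fin m) (c : ZMod n), (∑ t, lam t * (Pi.single w c : Fin m → ZMod n) t) = lam w * c := by
    intro w c
    rw [Finset.sum_eq_single w]
    · rw [Pi.single_eq_same]
    · intro t _ ht; rw [Pi.single_eq_of_ne ht, mul_zero]
    · intro h; exact absurd (Finset.mem_univ w) h
  simp only [dot, Pi.add_apply, mul_add, Finset.sum_add_distrib, hsingle]

lemma wElt_eq (hq : IsPrimitiveRoot q n) (hn0 : (n : k) ≠ 0) (l : Fin m)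
    (hl : (l : ℕ) + 1 < m) :
    wElt n m q l hl = ∑ lam : Fin m → ZMod n,
      chi q (lam l * lam ⟨(l : ℕ) + 1, hl⟩) • Lam n m q lam := by
  set l' : Fin m := ⟨(l : ℕ) + 1, hl⟩ with hl'
  calc wElt n m q l hl
      = (n : k)⁻¹ • ∑ i ∈ Finset.range n, ∑ j ∈ Finset.range n,
          (q⁻¹) ^ (i * j) • ∑ lam : Fin m → ZMod n,
            chi q (-(lam l * (i : ZMod n) + lam l' * (j : ZMod n))) • Lam n m q lam := by
        rw [wElt]
        congr 1
        refine Finset.sum_congr rfl fun i _ => Finset.sum_congr rfl fun j _ => ?_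
        congr 1
        rw [show (MonoidAlgebra.of k (Multiplicative (Fin m → ZMod n))
            (Multiplicative.ofAdd ((Pi.single l ((i : ZMod n))
              + Pi.single l' ((j : ZMod n)) : Fin m → ZMod n))))
          = X k (Pi.single l ((i : ZMod n)) + Pi.single l' ((j : ZMod n))) from rfl,
          X_eq_sum hq hn0]
        refine Finset.sum_congr rfl fun lam _ => ?_
        rw [dot_single_single]
    _ = ∑ i ∈ Finset.range n, ∑ j ∈ Finset.range n, ∑ lam : Fin m → ZMod n,
          ((n : k)⁻¹ * ((q⁻¹) ^ (i * j)
            * chi q (-(lam l * (i : ZMod n) + lam l' * (j : ZMod n))))) • Lam n m q lam := by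
        rw [Finset.smul_sum]
        refine Finset.sum_congr rfl fun i _ => ?_
        rw [Finset.smul_sum]
        refine Finset.sum_congr rfl fun j _ => ?_
        rw [smul_smul, Finset.smul_sum]
        refine Finset.sum_congr rfl fun lam _ => ?_
        rw [smul_smul, mul_assoc]
    _ = ∑ lam : Fin m → ZMod n, ∑ i ∈ Finset.range n, ∑ j ∈ Finset.range n,
          ((n : k)⁻¹ * ((q⁻¹) ^ (i * j)
            * chi q (-(lam l * (i : ZMod n) + lam l' * (j : ZMod n))))) • Lam n m q lam := by
        exact (Finset.sum_congr rfl fun i _ => Finset.sum_comm).trans Finset.sum_comm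
    _ = ∑ lam : Fin m → ZMod n,
          chi q (lam l * lam l') • Lam n m q lam := by
        refine Finset.sum_congr rfl fun lam _ => ?_
        simp only [← Finset.sum_smul]
        congr 1
        rw [← w_coeff hq hn0 (lam l) (lam l'), Finset.mul_sum]
        exact Finset.sum_congr rfl fun i _ => (Finset.mul_sum _ _ _).symm

lemma chi_mul_eq_pow_val (hq1 : q ^ n = 1) (a b : ZMod n) :
    chi q (a * b) = q ^ (a.val * b.val) := by
  rw [chi, ZMod.val_mul, pow_mod_n hq1]

end W11

/-- With `ζ` a primitive `2n`-th root of unity and `q = ζ²`, one has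
`w_l = ∑_{λ ∈ A} q^{λ_l λ_{l+1}} Λ_λ`; in particular `w_l · y_l² = 1`, i.e. `w_l = y_l^{−2}`. -/
theorem wElt_eq_sum_Lam_and_inv {k : Type*} [Field k] [IsAlgClosed k] [CharZero k]
    (n m : ℕ) (hn : 2 ≤ n) (hm : 2 ≤ m) (ζ : k) (hζ : IsPrimitiveRoot ζ (2 * n)) :
    haveI : NeZero n := ⟨by omega⟩
    ∀ (l : Fin m) (hl : (l : ℕ) + 1 < m),
      wElt n m (ζ ^ 2) l hl
        = ∑ lam : Fin m → ZMod n,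
            (ζ ^ 2) ^ ((lam l).val * (lam ⟨(l : ℕ) + 1, hl⟩).val) • Lam n m (ζ ^ 2) lam ∧
      wElt n m (ζ ^ 2) l hl * (yElt n m ζ l hl) ^ 2 = 1 := by
  haveI : NeZero n := ⟨by omega⟩
  intro l hl
  have hq : IsPrimitiveRoot (ζ ^ 2) n := hζ.pow (by omega) rfl
  have hn0 : (n : k) ≠ 0 := Nat.cast_ne_zero.mpr (by omega)
  have hq1 : (ζ ^ 2) ^ n = 1 := hq.pow_eq_one
  have hζ0 : ζ ≠ 0 := fun h => W11.q_ne_zero (n := n) hq1 (by rw [h, zero_pow two_ne_zero])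
  have part1 : wElt n m (ζ ^ 2) l hl
      = ∑ lam : Fin m → ZMod n,
          (ζ ^ 2) ^ ((lam l).val * (lam ⟨(l : ℕ) + 1, hl⟩).val) • Lam n m (ζ ^ 2) lam := by
    rw [W11.wElt_eq hq hn0 l hl]
    refine Finset.sum_congr rfl fun lam _ => ?_
    rw [W11.chi_mul_eq_pow_val hq1]
  refine ⟨part1, ?_⟩
  rw [part1, yElt, pow_two (∑ lam : Fin m → ZMod n,
      (ζ⁻¹) ^ ((lam l).val * (lam ⟨(l : ℕ) + 1, hl⟩).val) • Lam n m (ζ ^ 2) lam),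
    W11.sum_smul_Lam_mul hq hn0, W11.sum_smul_Lam_mul hq hn0]
  have hcoeff : ∀ lam : Fin m → ZMod n,
      (ζ ^ 2) ^ ((lam l).val * (lam ⟨(l : ℕ) + 1, hl⟩).val)
        * ((ζ⁻¹) ^ ((lam l).val * (lam ⟨(l : ℕ) + 1, hl⟩).val)
          * (ζ⁻¹) ^ ((lam l).val * (lam ⟨(l : ℕ) + 1, hl⟩).val)) = 1 := by
    intro lam
    rw [← mul_pow, ← mul_pow,
      show (ζ ^ 2) * (ζ⁻¹ * ζ⁻¹) = 1 by field_simp [pow_two], one_pow]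
  simp only [hcoeff, one_smul]
  exact W11.sum_Lam_eq_one hq hn0
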